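/- For every natural number k ≥ 2, every finite unit-distance graph G = (V,E) with E nonempty, and every asymptotic k-coloring c of the plane, one has m_k(G) ≤ p(c). (Left-hand inequality of Theorem 2.) -/

import Mathlib

open MeasureTheory Real

noncomputable section

abbrev Plane := EuclideanSpace ℝ (Fin 2)

def vec (x y : ℝ) : Plane := (WithLp.equiv 2 (Fin 2 → ℝ)).symm ![x, y]

def dir (θ : ℝ) : Plane := vec (Real.cos θ) (Real.sin θ)

/-- The fundamental parallelogram `{t•u + s•v : 0 ≤ t, s < 1}`. -/
def para (u v : Plane) : Set Plane :=
  {x | ∃ t s : ℝ, 0 ≤ t ∧ t < 1 ∧ 0 ≤ s ∧ s < 1 ∧ x = t • u + s • v}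

/-- `p^per(c)` for a periodic coloring with fundamental parallelogram `para u v`. -/
def pper {k : ℕ} (c : Plane → Fin k) (u v : Plane) : ℝ :=
  (1 / (2 * π * (volume (para u v)).toReal)) *
    ∫ a in para u v, ∫ θ in (0:ℝ)..(2*π),
      (if c a = c (a + dir θ) then (1:ℝ) else 0)

/-- The square `[-R, R]²`. -/
def square (R : ℝ) : Set Plane := {x | x 0 ∈ Set.Icc (-R) R ∧ x 1 ∈ Set.Icc (-R) R}

-- `p^table(c)` on the "table" `P`: the conditional probability that both endpoints of a
-- random needle have the same color, given that the second endpoint also lands in `P`.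
open Classical in
def ptableSet {k : ℕ} (c : Plane → Fin k) (P : Set Plane) : ℝ :=
  (∫ a in P, ∫ θ in (0:ℝ)..(2*π),
      (if c a = c (a + dir θ) ∧ a + dir θ ∈ P then (1:ℝ) else 0)) /
  (∫ a in P, ∫ θ in (0:ℝ)..(2*π), (if a + dir θ ∈ P then (1:ℝ) else 0))

/-- `p^table_R(c)`, on the square table `[-R, R]²`. -/
def ptable {k : ℕ} (c : Plane → Fin k) (R : ℝ) : ℝ := ptableSet c (square R)

-- Number of monochromatic edges of `G` under the vertex coloring `χ`.
open Classical in
def monoCount {V : Type} [Fintype V] {k : ℕ} (G : SimpleGraph V) (χ : V → Fin k) : ℕ :=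
  (G.edgeFinset.filter fun e => (e.map χ).IsDiag).card

-- `m_k(G)`: the least fraction of monochromatic edges over all `k`-colorings of `G`.
open Classical in
def mval {V : Type} [Fintype V] (k : ℕ) (G : SimpleGraph V) : ℝ :=
  ⨅ χ : V → Fin k, (monoCount G χ : ℝ) / (G.edgeFinset.card : ℝ)

/-!
Fix a unit-distance drawing `f` of `G` and place it at a uniformly random position
`a ∈ [-R, R]²`, rotated by a uniformly random angle `θ`. Every placement colors `G` by
`i ↦ c (a + rot θ (f i))`, so on average at least `m_k(G) |E|` edges are monochromatic.
For a single edge `ij`, write `f j - f i = dir φ`: the measure-preserving map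
`(a, θ) ↦ (a + rot θ (f i), θ + φ)` turns its placements into needles of the slightly larger
table `[-S, S]²`, `S = R + M + 1` with `M` bounding the drawing, and needle angles only matter
modulo `2π`. Hence each edge is monochromatic on a set of placements no larger than the
numerator of `p^table_S(c)`, which gives `m_k(G) (2R)² ≤ p^table_S(c) (2S)²`; let `R → ∞`.
-/

open Set Filter Topology

@[simp] lemma vec_apply_zero (x y : ℝ) : vec x y 0 = x := rfl
@[simp] lemma vec_apply_one (x y : ℝ) : vec x y 1 = y := rfl

lemma plane_ext {a b : Plane} (h0 : a 0 = b 0) (h1 : a 1 = b 1) : a = b := by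
  ext i
  fin_cases i <;> assumption

lemma continuous_vec {f g : ℝ → ℝ} (hf : Continuous f) (hg : Continuous g) :
    Continuous (fun θ => vec (f θ) (g θ)) := by
  refine (PiLp.continuous_toLp 2 _).comp (continuous_pi fun i => ?_)
  fin_cases i <;> simpa

lemma continuous_dir : Continuous dir := continuous_vec continuous_cos continuous_sin

lemma dir_periodic : Function.Periodic dir (2 * π) := by
  intro θ
  simp [dir]

lemma abs_dir_apply_le (θ : ℝ) (i : Fin 2) : |dir θ i| ≤ 1 := by
  fin_cases i
  exacts [abs_cos_le_one θ, abs_sin_le_one θ]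

lemma exists_dir_eq {u : Plane} (hu : ‖u‖ = 1) : ∃ φ, dir φ = u := by
  have hsq : u 0 ^ 2 + u 1 ^ 2 = 1 := by
    rw [← Fin.sum_univ_two (fun i => u i ^ 2), ← EuclideanSpace.real_norm_sq_eq, hu, one_pow]
  obtain ⟨φ, hφ⟩ := (Complex.norm_eq_one_iff ⟨u 0, u 1⟩).1 <| by
    rw [← sq_eq_sq₀ (norm_nonneg _) zero_le_one, Complex.sq_norm, Complex.normSq_apply]
    simpa [← sq] using hsq
  refine ⟨φ, plane_ext ?_ ?_⟩
  · simpa [dir] using congrArg Complex.re hφ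
  · simpa [dir] using congrArg Complex.im hφ

def rot (θ : ℝ) (x : Plane) : Plane :=
  vec (cos θ * x 0 - sin θ * x 1) (sin θ * x 0 + cos θ * x 1)

lemma rot_add (θ : ℝ) (x y : Plane) : rot θ (x + y) = rot θ x + rot θ y := by
  apply plane_ext <;> simp only [rot, vec_apply_zero, vec_apply_one, PiLp.add_apply] <;> ring

lemma rot_dir (θ ψ : ℝ) : rot θ (dir ψ) = dir (θ + ψ) := by
  apply plane_ext <;> simp [rot, dir, cos_add, sin_add]

lemma continuous_rot (x : Plane) : Continuous (fun θ => rot θ x) :=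
  continuous_vec (by fun_prop) (by fun_prop)

lemma abs_rot_apply_le (θ : ℝ) (x : Plane) (i : Fin 2) : |rot θ x i| ≤ |x 0| + |x 1| := by
  have hc := abs_cos_le_one θ
  have hs := abs_sin_le_one θ
  have key : ∀ a b : ℝ, |a| ≤ 1 → |b| ≤ 1 → |a * x 0| + |b * x 1| ≤ |x 0| + |x 1| :=
    fun a b ha hb => by
      rw [abs_mul, abs_mul]
      gcongr <;> apply mul_le_of_le_one_left (abs_nonneg _) <;> assumption
  fin_cases i
  · exact (abs_sub _ _).trans (key _ _ hc hs)
  · exact (abs_add_le _ _).trans (key _ _ hs hc)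

lemma mem_square_iff {x : Plane} {S : ℝ} : x ∈ square S ↔ ∀ i, |x i| ≤ S := by
  simp [square, Fin.forall_fin_two, abs_le]

lemma add_mem_square {x y : Plane} {R M : ℝ} (hx : x ∈ square R) (hy : ∀ i, |y i| ≤ M) :
    x + y ∈ square (R + M) := by
  rw [mem_square_iff] at hx ⊢
  exact fun i => (abs_add_le _ _).trans (add_le_add (hx i) (hy i))

lemma square_mono {R S : ℝ} (h : R ≤ S) : square R ⊆ square S := fun x hx => by
  rw [mem_square_iff] at hx ⊢
  exact fun i => (hx i).trans h

lemma measurableSet_square (R : ℝ) : MeasurableSet (square R) :=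
  ((measurable_pi_apply 0).comp (PiLp.continuous_ofLp 2 _).measurable measurableSet_Icc).inter
    ((measurable_pi_apply 1).comp (PiLp.continuous_ofLp 2 _).measurable measurableSet_Icc)

lemma volume_square {R : ℝ} (hR : 0 ≤ R) :
    volume (square R) = ENNReal.ofReal ((2 * R) ^ 2) := by
  have : square R = (MeasurableEquiv.toLp 2 (Fin 2 → ℝ)).symm ⁻¹'
      (univ.pi fun _ => Icc (-R) R) := by
    ext x
    simp [square, Pi.le_def, Fin.forall_fin_two, and_and_and_comm]
  rw [this, (EuclideanSpace.volume_preserving_symm_measurableEquiv_toLp (Fin 2)).measure_preimage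
    (MeasurableSet.univ_pi fun _ => measurableSet_Icc).nullMeasurableSet, volume_pi_pi,
    Fin.prod_univ_two, Real.volume_Icc, ← ENNReal.ofReal_mul (by linarith)]
  ring_nf

def needles (Q : Set (Plane × Plane)) (t : ℝ) : Set (Plane × ℝ) :=
  {z | z.2 ∈ Ioc t (t + 2 * π) ∧ (z.1, z.1 + dir z.2) ∈ Q}

lemma measurableSet_needles {Q : Set (Plane × Plane)} (hQ : MeasurableSet Q) (t : ℝ) :
    MeasurableSet (needles Q t) :=
  (measurable_snd measurableSet_Ioc).inter <|
    (measurable_fst.prodMk (measurable_fst.add (continuous_dir.measurable.comp measurable_snd))) hQ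

lemma needles_subset {P : Set Plane} {Q : Set (Plane × Plane)} (hQ : Q ⊆ P ×ˢ univ) (t : ℝ) :
    needles Q t ⊆ P ×ˢ Ioc t (t + 2 * π) :=
  fun _ hz => ⟨(hQ hz.2).1, hz.1⟩

lemma volume_Ioc_inter_preimage_dir {W : Set Plane} (hW : MeasurableSet W) (t s : ℝ) :
    volume (Ioc t (t + 2 * π) ∩ dir ⁻¹' W) = volume (Ioc s (s + 2 * π) ∩ dir ⁻¹' W) := by
  have : Fact (0 < 2 * π) := ⟨by positivity⟩
  -- `dir ⁻¹' W` is the pull-back of a set of the circle `ℝ ⧸ 2πℤ`, whose measure every window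
  -- `(t, t + 2π]` sees in full
  let F : Set (AddCircle (2 * π)) := dir_periodic.lift ⁻¹' W
  have hF : MeasurableSet F := measurableSet_quotient.2 (continuous_dir.measurable hW)
  have key (r : ℝ) : volume (Ioc r (r + 2 * π) ∩ dir ⁻¹' W) = volume F := by
    rw [inter_comm, ← Measure.restrict_apply (continuous_dir.measurable hW)]
    exact (AddCircle.measurePreserving_mk (2 * π) r).measure_preimage hF.nullMeasurableSet
  exact (key t).trans (key s).symm

lemma volume_needles {Q : Set (Plane × Plane)} (hQ : MeasurableSet Q) (t : ℝ) :
    volume (needles Q t) = volume (needles Q 0) := by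
  simp only [Measure.volume_eq_prod, Measure.prod_apply (measurableSet_needles hQ _)]
  refine lintegral_congr fun a => ?_
  have hW : MeasurableSet {w | (a, a + w) ∈ Q} :=
    (measurable_const.prodMk (measurable_const.add measurable_id)) hQ
  exact volume_Ioc_inter_preimage_dir hW t 0

lemma volume_square_lt_top (S : ℝ) : volume (square S) < ⊤ :=
  (measure_mono (square_mono (le_abs_self S))).trans_lt <| by
    rw [volume_square (abs_nonneg S)]
    exact ENNReal.ofReal_lt_top

lemma volume_prod_Ioc_lt_top {P : Set Plane} (hP : volume P < ⊤) (a b : ℝ) :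
    volume (P ×ˢ Ioc a b) < ⊤ := by
  rw [Measure.volume_eq_prod, Measure.prod_prod, Real.volume_Ioc]
  exact ENNReal.mul_lt_top hP ENNReal.ofReal_lt_top

lemma measureReal_square_prod_Ioc {R : ℝ} (hR : 0 ≤ R) :
    volume.real (square R ×ˢ Ioc 0 (2 * π)) = (2 * R) ^ 2 * (2 * π) := by
  rw [Measure.real, Measure.volume_eq_prod, Measure.prod_prod, volume_square hR, Real.volume_Ioc,
    sub_zero, ENNReal.toReal_mul, ENNReal.toReal_ofReal (by positivity),
    ENNReal.toReal_ofReal (by positivity)]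

open Classical in
lemma setIntegral_intervalIntegral_ite_eq_measureReal {P : Set Plane} (hP : MeasurableSet P)
    (hPfin : volume P < ⊤) {Q : Set (Plane × Plane)} (hQ : MeasurableSet Q)
    (hQP : Q ⊆ P ×ˢ univ) :
    (∫ a in P, ∫ θ in (0 : ℝ)..(2 * π), if (a, a + dir θ) ∈ Q then (1 : ℝ) else 0) =
      volume.real (needles Q 0) := by
  have hN := measurableSet_needles hQ 0
  have hX : MeasurableSet (P ×ˢ Ioc 0 (2 * π)) := hP.prod measurableSet_Ioc
  have hind : EqOn ((needles Q 0).indicator (1 : Plane × ℝ → ℝ))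
      (fun z : Plane × ℝ => if (z.1, z.1 + dir z.2) ∈ Q then (1 : ℝ) else 0)
      (P ×ˢ Ioc 0 (2 * π)) := by
    rintro z ⟨-, hz⟩
    simp [needles, indicator_apply, hz.1, hz.2]
  have hint := ((integrableOn_const (C := (1 : ℝ))
    (volume_prod_Ioc_lt_top hPfin 0 (2 * π)).ne).indicator hN).congr_fun hind hX
  rw [Measure.volume_eq_prod] at hint
  simp_rw [intervalIntegral.integral_of_le (by positivity : (0 : ℝ) ≤ 2 * π)]
  rw [← setIntegral_prod _ hint, ← setIntegral_congr_fun hX hind, integral_indicator_one hN,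
    measureReal_restrict_apply hN, inter_eq_left.2 (by simpa using needles_subset hQP 0),
    Measure.volume_eq_prod]

lemma measurePreserving_add_prod_add {v : ℝ → Plane} (hv : Measurable v) (φ : ℝ) :
    MeasurePreserving (fun z : Plane × ℝ => (z.1 + v z.2, z.2 + φ)) := by
  have h := (measurePreserving_add_right volume φ).skew_product (g := fun θ a => a + v θ)
    (measurable_snd.add (hv.comp measurable_fst))
    (ae_of_all _ fun θ => map_add_right_eq_self volume (v θ))
  rw [Measure.volume_eq_prod]
  exact (Measure.measurePreserving_swap.comp h).comp Measure.measurePreserving_swap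

open Classical in
lemma mul_measureReal_le_sum_measureReal {α ι : Type*} [MeasurableSpace α] {μ : Measure α}
    {X : Set α} (hX : MeasurableSet X) (hXfin : μ X ≠ ⊤) (s : Finset ι) {B : ι → Set α}
    (hB : ∀ i, MeasurableSet (B i)) (hBX : ∀ i, B i ⊆ X) {m : ℝ}
    (hm : ∀ x ∈ X, m ≤ (s.filter (fun i => x ∈ B i)).card) :
    m * μ.real X ≤ ∑ i ∈ s, μ.real (B i) := by
  have hint : ∀ i ∈ s, Integrable ((B i).indicator (1 : α → ℝ)) (μ.restrict X) :=
    fun i _ => (integrableOn_const hXfin).indicator (hB i)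
  calc m * μ.real X = ∫ x in X, m ∂μ := by rw [setIntegral_const, smul_eq_mul, mul_comm]
    _ ≤ ∫ x in X, ∑ i ∈ s, (B i).indicator 1 x ∂μ :=
      setIntegral_mono_on (integrableOn_const hXfin) (integrable_finsetSum s hint) hX
        fun x hx => (hm x hx).trans_eq <| by
          simp only [Finset.natCast_card_filter, indicator_apply, Pi.one_apply]
    _ = ∑ i ∈ s, μ.real (B i) := by
      rw [integral_finsetSum s hint]
      refine Finset.sum_congr rfl fun i _ => ?_
      rw [integral_indicator_one (hB i), measureReal_restrict_apply (hB i),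
        inter_eq_left.2 (hBX i)]

open Classical in
lemma mval_mul_card_le_monoCount {V : Type} [Fintype V] {k : ℕ} (G : SimpleGraph V)
    (χ : V → Fin k) : mval k G * G.edgeFinset.card ≤ monoCount G χ := by
  rcases (Nat.cast_nonneg (α := ℝ) G.edgeFinset.card).eq_or_lt with h | h
  · rw [← h, mul_zero]
    positivity
  · rw [← le_div_iff₀ h]
    exact ciInf_le ⟨0, by rintro _ ⟨χ, rfl⟩; positivity⟩ χ

section Coloring

variable {k : ℕ} {c : Plane → Fin k}

def sameColorPairs (c : Plane → Fin k) (P : Set Plane) : Set (Plane × Plane) :=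
  P ×ˢ P ∩ {p | c p.1 = c p.2}

lemma measurableSet_sameColorPairs (hc : Measurable c) {P : Set Plane} (hP : MeasurableSet P) :
    MeasurableSet (sameColorPairs c P) :=
  (hP.prod hP).inter (measurableSet_eq_fun (hc.comp measurable_fst) (hc.comp measurable_snd))

lemma ptableSet_eq_div (hc : Measurable c) {P : Set Plane} (hP : MeasurableSet P)
    (hPfin : volume P < ⊤) :
    ptableSet c P =
      volume.real (needles (sameColorPairs c P) 0) / volume.real (needles (P ×ˢ P) 0) := by
  rw [ptableSet, ← setIntegral_intervalIntegral_ite_eq_measureReal hP hPfin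
      (measurableSet_sameColorPairs hc hP) (fun p hp => ⟨hp.1.1, trivial⟩),
    ← setIntegral_intervalIntegral_ite_eq_measureReal hP hPfin (hP.prod hP)
      (fun p hp => ⟨hp.1, trivial⟩)]
  congr 1 <;> refine setIntegral_congr_fun hP fun a ha =>
    intervalIntegral.integral_congr fun θ _ => ?_ <;> congr 1
  · simp [sameColorPairs, ha, and_comm]
  · simp [ha]

lemma volume_monochromatic_placements_le (hc : Measurable c) {u v : Plane} (huv : dist u v = 1)
    {R M : ℝ} (hu : |u 0| + |u 1| ≤ M) :
    volume {z : Plane × ℝ | z ∈ square R ×ˢ Ioc 0 (2 * π) ∧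
        c (z.1 + rot z.2 u) = c (z.1 + rot z.2 v)} ≤
      volume (needles (sameColorPairs c (square (R + M + 1))) 0) := by
  obtain ⟨φ, hφ⟩ := exists_dir_eq (u := v - u) (by rw [← dist_eq_norm, dist_comm, huv])
  have hN := measurableSet_needles (measurableSet_sameColorPairs hc
    (measurableSet_square (R + M + 1))) φ
  calc _ ≤ volume ((fun z : Plane × ℝ => (z.1 + rot z.2 u, z.2 + φ)) ⁻¹'
          needles (sameColorPairs c (square (R + M + 1))) φ) := measure_mono ?_
    _ = volume (needles (sameColorPairs c (square (R + M + 1))) φ) :=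
      (measurePreserving_add_prod_add (continuous_rot u).measurable φ).measure_preimage
        hN.nullMeasurableSet
    _ = _ := volume_needles (measurableSet_sameColorPairs hc (measurableSet_square _)) φ
  rintro ⟨a, θ⟩ ⟨⟨ha, hθ⟩, hcol⟩
  have hv : a + rot θ u + dir (θ + φ) = a + rot θ v := by
    rw [← rot_dir, add_assoc, ← rot_add, hφ, add_sub_cancel]
  have hau : a + rot θ u ∈ square (R + M) :=
    add_mem_square ha fun i => (abs_rot_apply_le θ u i).trans hu
  refine ⟨⟨by linarith [hθ.1], by linarith [hθ.2]⟩, ⟨square_mono (by linarith) hau,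
    add_mem_square hau (abs_dir_apply_le _)⟩, ?_⟩
  simpa [hv] using hcol

lemma measureReal_needles_sameColorPairs_square_le (hc : Measurable c) {S : ℝ} (hS : 0 ≤ S) :
    volume.real (needles (sameColorPairs c (square S)) 0) ≤
      ptable c S * ((2 * S) ^ 2 * (2 * π)) := by
  have hfin := (volume_prod_Ioc_lt_top (volume_square_lt_top S) 0 (0 + 2 * π)).ne
  have hsub : needles (square S ×ˢ square S) 0 ⊆ square S ×ˢ Ioc 0 (0 + 2 * π) :=
    needles_subset (prod_mono subset_rfl (subset_univ _)) 0
  rw [ptable, ptableSet_eq_div hc (measurableSet_square S) (volume_square_lt_top S)]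
  set N := volume.real (needles (sameColorPairs c (square S)) 0)
  set D := volume.real (needles (square S ×ˢ square S) 0)
  have hD : D ≤ (2 * S) ^ 2 * (2 * π) := by
    rw [← measureReal_square_prod_Ioc hS, ← zero_add (2 * π)]
    exact measureReal_mono hsub hfin
  have hND : N ≤ D :=
    measureReal_mono (fun z hz => ⟨hz.1, hz.2.1⟩) (measure_ne_top_of_subset hsub hfin)
  by_cases h : D = 0
  · rw [h] at hND ⊢
    simpa using hND
  · calc N = N / D * D := (div_mul_cancel₀ _ h).symm
      _ ≤ _ := mul_le_mul_of_nonneg_left hD (by positivity)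

open Classical in
lemma mval_mul_card_mul_area_le {V : Type} [Fintype V] (hc : Measurable c) (G : SimpleGraph V)
    {f : V → Plane} (hf : ∀ i j, G.Adj i j → dist (f i) (f j) = 1) {M : ℝ}
    (hM : ∀ i, |f i 0| + |f i 1| ≤ M) {R : ℝ} (hR : 0 ≤ R) :
    mval k G * G.edgeFinset.card * ((2 * R) ^ 2 * (2 * π)) ≤
      G.edgeFinset.card * volume.real (needles (sameColorPairs c (square (R + M + 1))) 0) := by
  set X := square R ×ˢ Ioc 0 (2 * π)
  set N := volume.real (needles (sameColorPairs c (square (R + M + 1))) 0)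
  have hX : MeasurableSet X := (measurableSet_square R).prod measurableSet_Ioc
  have hXfin : volume X ≠ ⊤ := (volume_prod_Ioc_lt_top (volume_square_lt_top R) _ _).ne
  let χ : Plane × ℝ → V → Fin k := fun z i => c (z.1 + rot z.2 (f i))
  let B : Sym2 V → Set (Plane × ℝ) := fun e => {z | z ∈ X ∧ (e.map (χ z)).IsDiag}
  have hB_pair (i j : V) :
      B s(i, j) = {z | z ∈ X ∧ c (z.1 + rot z.2 (f i)) = c (z.1 + rot z.2 (f j))} := by
    simp [B, χ]
  have hBm (e : Sym2 V) : MeasurableSet (B e) := by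
    induction e using Sym2.ind with
    | h i j =>
      have hpl (u : Plane) : Measurable fun z : Plane × ℝ => z.1 + rot z.2 u :=
        measurable_fst.add ((continuous_rot u).measurable.comp measurable_snd)
      rw [hB_pair]
      exact hX.inter (measurableSet_eq_fun (hc.comp (hpl _)) (hc.comp (hpl _)))
  have hBN : ∀ e ∈ G.edgeFinset, volume.real (B e) ≤ N := by
    intro e he
    induction e using Sym2.ind with
    | h i j =>
      rw [hB_pair]
      refine ENNReal.toReal_mono ?_ <| volume_monochromatic_placements_le hc
        (hf i j (SimpleGraph.mem_edgeFinset.1 he)) (hM i)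
      exact measure_ne_top_of_subset (needles_subset (fun p hp => ⟨hp.1.1, trivial⟩) 0)
        (volume_prod_Ioc_lt_top (volume_square_lt_top _) _ _).ne
  calc mval k G * G.edgeFinset.card * ((2 * R) ^ 2 * (2 * π))
      = mval k G * G.edgeFinset.card * volume.real X := by rw [measureReal_square_prod_Ioc hR]
    _ ≤ ∑ e ∈ G.edgeFinset, volume.real (B e) :=
      mul_measureReal_le_sum_measureReal hX hXfin _ hBm (fun _ _ hz => hz.1) fun z hz =>
        (mval_mul_card_le_monoCount G (χ z)).trans_eq <| by
          rw [monoCount]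
          congr 2
          ext e
          simp [B, hz]
    _ ≤ ∑ _e ∈ G.edgeFinset, N := Finset.sum_le_sum hBN
    _ = G.edgeFinset.card * N := by rw [Finset.sum_const, nsmul_eq_mul]

lemma mval_mul_sq_le {V : Type} [Fintype V] (hc : Measurable c)
    (G : SimpleGraph V) (hE : G.edgeSet.Nonempty) {f : V → Plane}
    (hf : ∀ i j, G.Adj i j → dist (f i) (f j) = 1) {M : ℝ} (hM0 : 0 ≤ M)
    (hM : ∀ i, |f i 0| + |f i 1| ≤ M) {R : ℝ} (hR : 0 ≤ R) :
    mval k G * R ^ 2 ≤ ptable c (R + M + 1) * (R + M + 1) ^ 2 := by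
  classical
  obtain ⟨e, he⟩ := hE
  have hcard : (0 : ℝ) < G.edgeFinset.card :=
    Nat.cast_pos.2 (Finset.card_pos.2 ⟨e, SimpleGraph.mem_edgeFinset.2 he⟩)
  have h := (mval_mul_card_mul_area_le hc G hf hM hR).trans (mul_le_mul_of_nonneg_left
    (measureReal_needles_sameColorPairs_square_le hc (by positivity)) hcard.le)
  refine le_of_mul_le_mul_left ?_ (by positivity : (0 : ℝ) < G.edgeFinset.card * (8 * π))
  convert h using 1 <;> ring

end Coloring

lemma tendsto_add_div_self_atTop (a : ℝ) : Tendsto (fun R : ℝ => (R + a) / R) atTop (𝓝 1) := by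
  have h := (tendsto_inv_atTop_zero.const_mul a).const_add 1
  rw [mul_zero, add_zero] at h
  refine h.congr' ?_
  filter_upwards [eventually_ne_atTop 0] with R hR
  field_simp

theorem stmt3_general (k : ℕ) {V : Type} [Fintype V] (G : SimpleGraph V)
    (hE : G.edgeSet.Nonempty)
    (hUD : ∃ f : V → Plane, ∀ i j : V, G.Adj i j → dist (f i) (f j) = 1)
    (c : Plane → Fin k) (hc : Measurable c) (p : ℝ)
    (hp : Filter.Tendsto (fun R : ℝ => ptable c R) Filter.atTop (nhds p)) :
    mval k G ≤ p := by
  obtain ⟨f, hf⟩ := hUD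
  set M := ∑ i, (|f i 0| + |f i 1|)
  have hM (i : V) : |f i 0| + |f i 1| ≤ M :=
    Finset.single_le_sum (f := fun j => |f j 0| + |f j 1|) (fun j _ => by positivity)
      (Finset.mem_univ i)
  have hlim : Tendsto (fun R => ptable c (R + M + 1) * ((R + M + 1) / R) ^ 2) atTop (𝓝 p) := by
    have hS : Tendsto (fun R : ℝ => R + M + 1) atTop atTop :=
      tendsto_atTop_add_const_right _ _ (tendsto_atTop_add_const_right _ _ tendsto_id)
    simpa [add_assoc] using (hp.comp hS).mul ((tendsto_add_div_self_atTop (M + 1)).pow 2)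
  refine ge_of_tendsto hlim ?_
  filter_upwards [eventually_gt_atTop 0] with R hR
  rw [div_pow, mul_div_assoc', le_div_iff₀ (by positivity)]
  exact mval_mul_sq_le hc G hE hf (by positivity) hM hR.le

/-- Left-hand inequality of Theorem 2: for every finite unit-distance graph `G` with at
least one edge and every asymptotic `k`-coloring `c` of the plane (with asymptotic
probability `p`), `m_k(G) ≤ p(c)`. -/
theorem stmt3 (k : ℕ) (hk : 2 ≤ k) {V : Type} [Fintype V] (G : SimpleGraph V)
    (hE : G.edgeSet.Nonempty)
    (hUD : ∃ f : V → Plane, ∀ i j : V, G.Adj i j → dist (f i) (f j) = 1)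
    (c : Plane → Fin k) (hc : Measurable c) (p : ℝ)
    (hp : Filter.Tendsto (fun R : ℝ => ptable c R) Filter.atTop (nhds p)) :
    mval k G ≤ p :=
  stmt3_general k G hE hUD c hc p hp
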